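/- (Munarini's identity) For all complex numbers α, β, x and every natural number n, the sum over k from 0 to n of (−1)^{n−k}·C(β−α+n, n−k)·C(β+k, k)·(1+x)^k equals the sum over k from 0 to n of C(α, n−k)·C(β+k, k)·x^k. -/
import Mathlib

open Finset


/-- The generalized binomial coefficient `C(x, k) = x(x-1)⋯(x-k+1)/k!` for `x : ℂ`. -/
noncomputable def genBinom (x : ℂ) (k : ℕ) : ℂ := (∏ i ∈ Finset.range k, (x - i)) / (Nat.factorial k)

lemma genBinom_eq_choose (x : ℂ) (k : ℕ) : genBinom x k = Ring.choose x k := by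
  have h2 : (descPochhammer ℤ k).smeval x = ∏ i ∈ range k, (x - i) := by
    induction k with
    | zero => simp
    | succ k ih =>
      rw [descPochhammer_succ_right, Polynomial.smeval_mul, ih, prod_range_succ,
        Polynomial.smeval_sub, Polynomial.smeval_X, Polynomial.smeval_natCast]
      simp
  have h := Ring.descPochhammer_eq_factorial_smul_choose x k
  rw [h2, nsmul_eq_mul] at h
  rw [genBinom, h]
  field_simp [Nat.factorial_ne_zero]

lemma genBinom_add (a b : ℂ) (m : ℕ) :
    genBinom (a + b) m = ∑ i ∈ range (m + 1), genBinom a i * genBinom b (m - i) := by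
  simp only [genBinom_eq_choose]
  rw [Ring.add_choose_eq m (Commute.all a b), Finset.Nat.sum_antidiagonal_eq_sum_range_succ_mk]

lemma genBinom_reflect (x : ℂ) (k : ℕ) :
    genBinom x k = (-1 : ℂ) ^ k * genBinom ((k : ℂ) - 1 - x) k := by
  unfold genBinom
  rw [← mul_div_assoc]
  congr 1
  rw [← prod_range_reflect (fun i => ((k:ℂ) - 1 - x - i)) k]
  rw [pow_eq_prod_const, ← prod_mul_distrib]
  refine prod_congr rfl fun i hi => ?_
  have hik : i < k := mem_range.mp hi
  have : ((k - 1 - i : ℕ) : ℂ) = (k : ℂ) - 1 - i := by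
    rw [Nat.cast_sub (by omega), Nat.cast_sub (by omega)]
    push_cast; ring
  rw [this]
  ring

lemma genBinom_trinom (β : ℂ) {j k : ℕ} (hjk : j ≤ k) :
    genBinom (β + k) k * (k.choose j : ℂ) = genBinom (β + j) j * genBinom (β + k) (k - j) := by
  have hsplit : ∏ i ∈ range k, (β + k - i) =
      (∏ i ∈ range (k - j), (β + k - i)) * ∏ i ∈ range j, (β + j - i) := by
    have := prod_range_add (fun i : ℕ => (β + k - i)) (k - j) j
    rw [Nat.sub_add_cancel hjk] at this
    rw [this]
    congr 1
    refine prod_congr rfl fun i hi => ?_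
    push_cast [Nat.cast_sub hjk]
    ring
  have hch : (k.choose j : ℂ) * j.factorial * (k - j).factorial = k.factorial := by
    rw [← Nat.cast_mul, ← Nat.cast_mul, Nat.choose_mul_factorial_mul_factorial hjk]
  have hfac : (k.factorial : ℂ) ≠ 0 := Nat.cast_ne_zero.mpr (Nat.factorial_ne_zero k)
  have hfj : (j.factorial : ℂ) ≠ 0 := Nat.cast_ne_zero.mpr (Nat.factorial_ne_zero j)
  have hfkj : ((k - j).factorial : ℂ) ≠ 0 := Nat.cast_ne_zero.mpr (Nat.factorial_ne_zero _)
  unfold genBinom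
  field_simp
  rw [hsplit]
  linear_combination (∏ i ∈ range (k - j), (β + (k:ℂ) - i)) * (∏ i ∈ range j, (β + (j:ℂ) - i)) * hch

/-- The key inner identity: `∑_{i=0}^m (-1)^{m-i} C(γ-α+m, m-i) C(γ+i, i) = C(α, m)`. -/
lemma munarini_inner_sum (α γ : ℂ) (m : ℕ) :
    ∑ i ∈ range (m + 1), (-1 : ℂ) ^ (m - i) * genBinom (γ - α + m) (m - i) * genBinom (γ + i) i
      = genBinom α m := by
  have step : ∀ i ∈ range (m + 1),
      (-1 : ℂ) ^ (m - i) * genBinom (γ - α + m) (m - i) * genBinom (γ + i) i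
        = (-1 : ℂ) ^ m * (genBinom (-γ - 1) i * genBinom (γ - α + m) (m - i)) := by
    intro i hi
    have him : i ≤ m := by have := mem_range.mp hi; omega
    have hrefl : genBinom (γ + i) i = (-1 : ℂ) ^ i * genBinom (-γ - 1) i := by
      rw [genBinom_reflect (γ + i) i]
      congr 2
      ring
    rw [hrefl]
    have : (-1 : ℂ) ^ (m - i) * (-1 : ℂ) ^ i = (-1 : ℂ) ^ m := by
      rw [← pow_add, Nat.sub_add_cancel him]
    calc (-1 : ℂ) ^ (m - i) * genBinom (γ - α + m) (m - i) * ((-1 : ℂ) ^ i * genBinom (-γ - 1) i)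
        = ((-1 : ℂ) ^ (m - i) * (-1 : ℂ) ^ i) * (genBinom (-γ - 1) i * genBinom (γ - α + m) (m - i)) := by ring
      _ = (-1 : ℂ) ^ m * (genBinom (-γ - 1) i * genBinom (γ - α + m) (m - i)) := by rw [this]
  rw [sum_congr rfl step, ← mul_sum, ← genBinom_add]
  have h1 : -γ - 1 + (γ - α + m) = (m : ℂ) - 1 - α := by ring
  rw [h1, genBinom_reflect α m]

/-- Munarini's identity. -/
theorem munarini_identity (α β x : ℂ) (n : ℕ) :
    ∑ k ∈ Finset.range (n + 1),
        (-1 : ℂ) ^ (n - k) * genBinom (β - α + n) (n - k) * genBinom (β + k) k * (1 + x) ^ k =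
      ∑ k ∈ Finset.range (n + 1), genBinom α (n - k) * genBinom (β + k) k * x ^ k := by
  -- expand (1+x)^k
  have hbin : ∀ k : ℕ, (1 + x) ^ k = ∑ j ∈ range (k + 1), (k.choose j : ℂ) * x ^ j := by
    intro k
    rw [add_comm, add_pow]
    exact sum_congr rfl fun j hj => by ring
  calc ∑ k ∈ range (n + 1),
        (-1 : ℂ) ^ (n - k) * genBinom (β - α + n) (n - k) * genBinom (β + k) k * (1 + x) ^ k
      = ∑ k ∈ range (n + 1), ∑ j ∈ range (k + 1),
          (-1 : ℂ) ^ (n - k) * genBinom (β - α + n) (n - k) * genBinom (β + k) k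
            * ((k.choose j : ℂ) * x ^ j) := by
        refine sum_congr rfl fun k hk => ?_
        rw [hbin k, mul_sum]
    _ = ∑ j ∈ range (n + 1), ∑ k ∈ Ico j (n + 1),
          (-1 : ℂ) ^ (n - k) * genBinom (β - α + n) (n - k) * genBinom (β + k) k
            * ((k.choose j : ℂ) * x ^ j) := by
        have hswap := Finset.sum_Ico_Ico_comm 0 (n + 1)
          (fun a b => (-1 : ℂ) ^ (n - b) * genBinom (β - α + n) (n - b) * genBinom (β + b) b
            * ((b.choose a : ℂ) * x ^ a))
        simp only [Finset.range_eq_Ico]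
        exact hswap.symm
    _ = ∑ j ∈ range (n + 1), genBinom α (n - j) * genBinom (β + j) j * x ^ j := by
        refine sum_congr rfl fun j hj => ?_
        have hjn : j ≤ n := by have := mem_range.mp hj; omega
        have hstep : ∀ k ∈ Ico j (n + 1),
            (-1 : ℂ) ^ (n - k) * genBinom (β - α + n) (n - k) * genBinom (β + k) k
              * ((k.choose j : ℂ) * x ^ j)
            = (genBinom (β + j) j * x ^ j) *
                ((-1 : ℂ) ^ (n - k) * genBinom (β - α + n) (n - k) * genBinom (β + k) (k - j)) := by
          intro k hk
          have hjk : j ≤ k := (mem_Ico.mp hk).1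
          have := genBinom_trinom β hjk
          calc (-1 : ℂ) ^ (n - k) * genBinom (β - α + n) (n - k) * genBinom (β + k) k
                * ((k.choose j : ℂ) * x ^ j)
              = (-1 : ℂ) ^ (n - k) * genBinom (β - α + n) (n - k)
                  * (genBinom (β + k) k * (k.choose j : ℂ)) * x ^ j := by ring
            _ = (-1 : ℂ) ^ (n - k) * genBinom (β - α + n) (n - k)
                  * (genBinom (β + j) j * genBinom (β + k) (k - j)) * x ^ j := by rw [this]
            _ = (genBinom (β + j) j * x ^ j) *
                  ((-1 : ℂ) ^ (n - k) * genBinom (β - α + n) (n - k) * genBinom (β + k) (k - j)) := by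
                ring
        rw [sum_congr rfl hstep, ← mul_sum]
        -- reindex k = j + i
        rw [Finset.sum_Ico_eq_sum_range]
        have hlen : n + 1 - j = (n - j) + 1 := by omega
        rw [hlen]
        have hre : ∀ i ∈ range ((n - j) + 1),
            (-1 : ℂ) ^ (n - (j + i)) * genBinom (β - α + n) (n - (j + i)) * genBinom (β + ((j + i : ℕ) : ℂ)) (j + i - j)
            = (-1 : ℂ) ^ ((n - j) - i) * genBinom ((β + j) - α + (n - j : ℕ)) ((n - j) - i)
                * genBinom ((β + j) + i) i := by
          intro i hi
          have him : i ≤ n - j := by have := mem_range.mp hi; omega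
          have e1 : n - (j + i) = (n - j) - i := by omega
          have e2 : j + i - j = i := by omega
          have e3 : β - α + n = (β + j) - α + ((n - j : ℕ) : ℂ) := by
            rw [Nat.cast_sub hjn]; ring
          have e4 : β + ((j + i : ℕ) : ℂ) = (β + j) + i := by push_cast; ring
          rw [e1, e2, e3, e4]
        rw [sum_congr rfl hre, munarini_inner_sum α (β + j) (n - j)]
        ring
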